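/- arXiv:1904.12461 — 3 statements merged into one kernel-verified Lean document; each statement's English description precedes it below -/
import Mathlib

section
/- Let a compact group G act continuously on the right of a locally compact Polish metric space (X,d) by isometries, let p : X → X/G be the quotient map onto the orbit space X/G equipped with the metric d_{X/G}(x*,y*) = inf_{g∈G} d(xg,y), and let q ≥ 1. Then the push-forward map p_♯ : M_q(X) → M_q(X/G) is onto; moreover, for every ν* ∈ M_q(X/G) there exists a G-invariant measure μ ∈ M_q^G(X) with p_♯μ = ν*. -/
open MeasureTheory ENNReal

section GW

variable {X : Type*} [MeasurableSpace X] [MetricSpace X]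

/-- A transference plan between two finite measures `μ` and `ν` of equal mass:
a Borel probability measure `π` on `X × X` with `|μ| π(A × X) = μ A` and
`|ν| π(X × B) = ν B`. -/
def IsCoupling (μ ν : Measure X) (π : Measure (X × X)) : Prop :=
  IsProbabilityMeasure π ∧
  (∀ A : Set X, MeasurableSet A → μ Set.univ * π (A ×ˢ (Set.univ : Set X)) = μ A) ∧
  (∀ B : Set X, MeasurableSet B → ν Set.univ * π ((Set.univ : Set X) ×ˢ B) = ν B)

/-- The (mass-scaled) `p`-Wasserstein distance
`W_p(μ,ν) = (|μ| ⨅_π ∫ d(x,y)^p dπ)^{1/p}`, as an extended nonnegative real. -/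
noncomputable def WpE (p : ℝ) (μ ν : Measure X) : ℝ≥0∞ :=
  (μ Set.univ * ⨅ π : {π : Measure (X × X) // IsCoupling μ ν π},
      ∫⁻ z, edist z.1 z.2 ^ p ∂(π.1)) ^ (1 / p)

/-- `μ ∈ M_p(X)`: `μ` is a finite (nonnegative Borel) measure with finite `p`-moment. -/
def MemMp (p : ℝ) (μ : Measure X) : Prop :=
  IsFiniteMeasure μ ∧ ∀ x₀ : X, ∫⁻ x, edist x x₀ ^ p ∂μ ≠ ∞

/-- Total variation mass `|μ - ν|` of the difference of two (finite) measures,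
as an extended nonnegative real. -/
noncomputable def tvE (μ ν : Measure X) : ℝ≥0∞ := (μ - ν) Set.univ + (ν - μ) Set.univ

/-- Total variation mass `|μ - ν|` as a real number. -/
noncomputable def tv (μ ν : Measure X) : ℝ := (tvE μ ν).toReal

/-- The generalized Wasserstein distance
`W_p^{a,b}(μ,ν) = inf { a|μ-μ'| + a|ν-ν'| + b W_p(μ',ν') : μ',ν' ∈ M_p(X), |μ'|=|ν'| }`,
as an extended nonnegative real. -/
noncomputable def genWE (a b p : ℝ) (μ ν : Measure X) : ℝ≥0∞ :=
  ⨅ (μ' : Measure X) (ν' : Measure X) (_ : MemMp p μ') (_ : MemMp p ν')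
      (_ : μ' Set.univ = ν' Set.univ),
    ENNReal.ofReal a * tvE μ μ' + ENNReal.ofReal a * tvE ν ν' +
      ENNReal.ofReal b * WpE p μ' ν'

/-- The generalized Wasserstein distance `W_p^{a,b}` as a real number. -/
noncomputable def genW (a b p : ℝ) (μ ν : Measure X) : ℝ := (genWE a b p μ ν).toReal

/-- `I(φ) = inf_{s ≥ 0} (sφ + a|1-s|)`. -/
noncomputable def Idual (a φ : ℝ) : ℝ :=
  sInf {v : ℝ | ∃ s : ℝ, 0 ≤ s ∧ v = s * φ + a * |1 - s|}

end GW

/-!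
Part one holds because `p` is 1-Lipschitz. For part two, `p` is a closed map (orbits are
compact), so a Kuratowski–Ryll-Nardzewski type selection gives a Borel section `s` of `p`.
Averaging `s_♯ ν` over the normalized Haar measure `κ` of `G`, i.e. taking the image of
`κ ⊗ ν` under `(g, y) ↦ g • s y`, gives a `G`-invariant lift of `ν`. Its moments are finite
because `d(g • s y, x₀) ≤ d(y, p x₀) + diam (G • x₀)`.
-/

open Set Filter Topology Metric
open scoped Pointwise

theorem measurable_sInf_setOf_mem {α : Type*} [MeasurableSpace α] {A : ℕ → Set α}
    (hA : ∀ j, MeasurableSet (A j)) : Measurable fun y => sInf {j | y ∈ A j} := by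
  classical
  -- the escape clause `y ∉ ⋃ i, A i` makes the search stop at `0`, matching `sInf ∅ = 0`
  have hex : ∀ y, ∃ j, y ∈ A j ∨ y ∉ ⋃ i, A i := fun y => by
    by_cases hy : y ∈ ⋃ i, A i
    · obtain ⟨j, hj⟩ := mem_iUnion.1 hy; exact ⟨j, Or.inl hj⟩
    · exact ⟨0, Or.inr hy⟩
  have heq : (fun y => sInf {j | y ∈ A j}) = fun y => Nat.find (hex y) := by
    funext y
    by_cases hy : y ∈ ⋃ i, A i
    · have hfind : y ∈ A (Nat.find (hex y)) := (Nat.find_spec (hex y)).resolve_right (not_not.2 hy)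
      exact le_antisymm (Nat.sInf_le hfind)
        (Nat.find_min' _ (Or.inl (Nat.sInf_mem (mem_iUnion.1 hy))))
    · rw [(Nat.find_eq_zero (hex y)).2 (Or.inr hy), Nat.sInf_eq_zero]
      exact Or.inr (eq_empty_of_forall_notMem fun j hj => hy (mem_iUnion.2 ⟨j, hj⟩))
  rw [heq]
  exact measurable_find hex fun j => (hA j).union (MeasurableSet.iUnion hA).compl

section Selection

variable {X Y : Type*} [MetricSpace X] (p : X → Y) (a : ℕ → X)

noncomputable def leastBallIndex (D : Set X) (r : ℝ) (y : Y) : ℕ :=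
  sInf {j | y ∈ p '' (D ∩ closedBall (a j) r)}

/- With `a` dense, step `n + 1` picks the first centre `a j` whose `(1/2)^(n+1)`-ball meets the
fibre inside the previous ball, so the centres form a Cauchy sequence converging into the fibre. -/
noncomputable def selectionIndex : ℕ → Y → ℕ
  | 0 => leastBallIndex p a univ 1
  | n + 1 => fun y =>
    leastBallIndex p a (closedBall (a (selectionIndex n y)) ((1 / 2) ^ n)) ((1 / 2) ^ (n + 1)) y

variable {p a}

theorem leastBallIndex_mem (ha : DenseRange a) {D : Set X} {r : ℝ} (hr : 0 < r) {y : Y}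
    (hy : y ∈ p '' D) : y ∈ p '' (D ∩ closedBall (a (leastBallIndex p a D r y)) r) := by
  obtain ⟨x, hxD, rfl⟩ := hy
  obtain ⟨j, hj⟩ := Metric.denseRange_iff.1 ha x r hr
  exact Nat.sInf_mem (s := {j | p x ∈ p '' (D ∩ closedBall (a j) r)})
    ⟨j, x, ⟨hxD, mem_closedBall.2 hj.le⟩, rfl⟩

theorem mem_image_closedBall_selectionIndex (ha : DenseRange a) (hp : Function.Surjective p)
    (y : Y) (n : ℕ) : y ∈ p '' closedBall (a (selectionIndex p a n y)) ((1 / 2) ^ n) := by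
  induction n with
  | zero =>
    rw [pow_zero]
    exact image_mono inter_subset_right (leastBallIndex_mem ha one_pos (by simpa using hp y))
  | succ n ih => exact image_mono inter_subset_right (leastBallIndex_mem ha (by positivity) ih)

theorem dist_selectionIndex_succ_le (ha : DenseRange a) (hp : Function.Surjective p) (y : Y)
    (n : ℕ) :
    dist (a (selectionIndex p a n y)) (a (selectionIndex p a (n + 1) y)) ≤ 3 / 2 / 2 ^ n := by
  obtain ⟨x, ⟨hx, hx'⟩, -⟩ := leastBallIndex_mem ha (r := (1 / 2) ^ (n + 1)) (by positivity)
    (mem_image_closedBall_selectionIndex ha hp y n)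
  calc dist (a (selectionIndex p a n y)) (a (selectionIndex p a (n + 1) y))
      ≤ (1 / 2) ^ n + (1 / 2) ^ (n + 1) := (dist_triangle_left _ _ x).trans (add_le_add hx hx')
    _ = 3 / 2 / 2 ^ n := by rw [one_div_pow, one_div_pow, pow_succ]; field_simp; ring

variable [TopologicalSpace Y] [MeasurableSpace Y] [OpensMeasurableSpace Y]

theorem measurable_leastBallIndex (hp : IsClosedMap p) {D : Set X} (hD : IsClosed D) (r : ℝ) :
    Measurable (leastBallIndex p a D r) :=
  measurable_sInf_setOf_mem fun _ => (hp _ (hD.inter isClosed_closedBall)).measurableSet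

theorem measurable_selectionIndex (hp : IsClosedMap p) (n : ℕ) :
    Measurable (selectionIndex p a n) := by
  induction n with
  | zero => exact measurable_leastBallIndex hp isClosed_univ 1
  | succ n ih =>
    have hstep : Measurable fun z : Y × ℕ =>
        leastBallIndex p a (closedBall (a z.2) ((1 / 2) ^ n)) ((1 / 2) ^ (n + 1)) z.1 := by
      refine measurable_from_prod_countable_left fun i => ?_
      dsimp only
      exact measurable_leastBallIndex hp isClosed_closedBall _
    unfold selectionIndex
    exact (hstep.comp (measurable_id.prodMk ih) :)

end Selection

theorem exists_measurable_rightInverse_of_isClosedMap {X Y : Type*} [MetricSpace X]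
    [TopologicalSpace.SeparableSpace X] [CompleteSpace X] [MeasurableSpace X] [BorelSpace X]
    [TopologicalSpace Y] [T1Space Y] [MeasurableSpace Y] [OpensMeasurableSpace Y] {p : X → Y}
    (hp_cont : Continuous p) (hp_surj : Function.Surjective p) (hp_closed : IsClosedMap p) :
    ∃ s : Y → X, Measurable s ∧ Function.RightInverse s p := by
  cases isEmpty_or_nonempty Y with
  | inl hY => exact ⟨isEmptyElim, measurable_of_empty _, isEmptyElim⟩
  | inr hY =>
    have : Nonempty X := hY.map fun y => (hp_surj y).choose
    set a := TopologicalSpace.denseSeq X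
    have ha : DenseRange a := TopologicalSpace.denseRange_denseSeq X
    set c : ℕ → Y → X := fun n y => a (selectionIndex p a n y)
    have hc : ∀ y, CauchySeq fun n => c n y := fun y =>
      cauchySeq_of_le_geometric_two (dist_selectionIndex_succ_le ha hp_surj y)
    choose s hs using fun y => cauchySeq_tendsto_of_complete (hc y)
    refine ⟨s, measurable_of_tendsto_metrizable
      (fun n => measurable_from_nat.comp (measurable_selectionIndex hp_closed n))
      (tendsto_pi_nhds.2 hs), fun y => ?_⟩
    -- points `x n` of the fibre with `dist (x n) (c n y) ≤ (1/2)^n` also converge to `s y`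
    choose x hx hpx using mem_image_closedBall_selectionIndex ha hp_surj y
    have hx_lim : Tendsto x atTop (𝓝 (s y)) := by
      refine tendsto_iff_dist_tendsto_zero.2 (squeeze_zero (fun _ => dist_nonneg)
        (fun n => (dist_triangle (x n) (c n y) (s y)).trans (add_le_add_left (hx n) _)) ?_)
      simpa using ((_root_.tendsto_pow_atTop_nhds_zero_of_lt_one (r := (1 / 2 : ℝ))
        (by norm_num) (by norm_num)).add (tendsto_iff_dist_tendsto_zero.1 (hs y)))
    exact (isClosed_singleton.preimage hp_cont).mem_of_tendsto hx_lim (Eventually.of_forall hpx)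

section Moments

variable {α X Y : Type*} [MeasurableSpace α] [MetricSpace X] [MeasurableSpace X]
  [OpensMeasurableSpace X] [MetricSpace Y] [MeasurableSpace Y] [OpensMeasurableSpace Y] {q : ℝ}

theorem lintegral_add_const_rpow_lt_top {μ : Measure α} [IsFiniteMeasure μ] {u : α → ℝ≥0∞}
    (hu : AEMeasurable u μ) (hu_int : ∫⁻ a, u a ^ q ∂μ < ∞) {C : ℝ≥0∞} (hC : C ≠ ∞)
    (hq : 1 ≤ q) : ∫⁻ a, (u a + C) ^ q ∂μ < ∞ := by
  refine lintegral_rpow_add_lt_top_of_lintegral_rpow_lt_top hu hu_int ?_ hq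
  rw [lintegral_const]
  exact mul_lt_top (rpow_lt_top_of_nonneg (by linarith) hC) (measure_lt_top μ _)

theorem MemMp.map_of_edist_le (hq : 1 ≤ q) {μ : Measure α} {f : α → X} {g : α → Y}
    (hf : Measurable f) (hg : Measurable g) (hμ : MemMp q (μ.map g))
    (hle : ∀ x₀, ∃ y₀, ∃ C ≠ ∞, ∀ a, edist (f a) x₀ ≤ edist (g a) y₀ + C) :
    MemMp q (μ.map f) := by
  have := hμ.1
  have : IsFiniteMeasure μ := ⟨by
    simpa [Measure.map_apply hg MeasurableSet.univ] using measure_lt_top (μ.map g) univ⟩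
  refine ⟨inferInstance, fun x₀ => ?_⟩
  obtain ⟨y₀, C, hC, hle⟩ := hle x₀
  have hmom := (hμ.2 y₀).lt_top
  rw [lintegral_map (by fun_prop) hg] at hmom
  rw [lintegral_map (by fun_prop) hf]
  refine ((lintegral_mono fun a => rpow_le_rpow (hle a) (by linarith)).trans_lt ?_).ne
  exact lintegral_add_const_rpow_lt_top (by fun_prop) hmom hC hq

end Moments

section OrbitSpace

variable {G X Y : Type*} [Group G] [MulAction G X] [MetricSpace X] [MetricSpace Y] {p : X → Y}

theorem bddBelow_range_dist_smul (x y : X) : BddBelow (range fun g : G => dist (g • x) y) :=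
  ⟨0, forall_mem_range.2 fun _ => dist_nonneg⟩

theorem lipschitzWith_one_of_dist_eq_iInf
    (hp_dist : ∀ x y : X, dist (p x) (p y) = ⨅ g : G, dist (g • x) y) : LipschitzWith 1 p :=
  LipschitzWith.of_dist_le_mul fun x y => by
    simpa [hp_dist] using ciInf_le (bddBelow_range_dist_smul (G := G) x y) 1

theorem map_smul_of_dist_eq_iInf
    (hp_dist : ∀ x y : X, dist (p x) (p y) = ⨅ g : G, dist (g • x) y) (g : G) (x : X) :
    p (g • x) = p x :=
  dist_le_zero.1 <| by
    simpa [hp_dist] using ciInf_le (bddBelow_range_dist_smul (g • x) x) g⁻¹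

theorem edist_smul_le_of_dist_eq_iInf [IsIsometricSMul G X]
    (hp_dist : ∀ x y : X, dist (p x) (p y) = ⨅ g : G, dist (g • x) y) {x₀ : X}
    (hx₀ : Bornology.IsBounded (MulAction.orbit G x₀)) (g : G) (x : X) :
    edist (g • x) x₀ ≤ edist (p x) (p x₀) + ENNReal.ofReal (diam (MulAction.orbit G x₀)) := by
  have h : dist (g • x) x₀ ≤ dist (p x) (p x₀) + diam (MulAction.orbit G x₀) := by
    rw [hp_dist, ← sub_le_iff_le_add]
    refine le_ciInf fun h => sub_le_iff_le_add.2 ?_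
    calc dist (g • x) x₀ ≤ dist (g • x) ((g * h⁻¹) • x₀) + dist ((g * h⁻¹) • x₀) x₀ :=
          dist_triangle _ _ _
      _ ≤ dist (h • x) x₀ + diam (MulAction.orbit G x₀) := by
          refine add_le_add (le_of_eq ?_) (dist_le_diam_of_mem hx₀ (MulAction.mem_orbit _ _)
            (MulAction.mem_orbit_self _))
          rw [mul_smul, dist_smul, ← dist_smul h, smul_inv_smul]
  rw [edist_dist, edist_dist]
  exact (ofReal_le_ofReal h).trans ofReal_add_le

theorem isClosedMap_of_dist_eq_iInf [TopologicalSpace G] [ContinuousInv G] [CompactSpace G]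
    [ContinuousSMul G X] (hp_surj : Function.Surjective p)
    (hp_dist : ∀ x y : X, dist (p x) (p y) = ⨅ g : G, dist (g • x) y) : IsClosedMap p := by
  intro F hF
  refine closure_subset_iff_isClosed.1 fun y hy => ?_
  obtain ⟨x, rfl⟩ := hp_surj y
  -- `p x` is a limit of points of `p '' F`, so `x` is a limit of points of the closed set `G • F`
  have hx : x ∈ (univ : Set G) • F := by
    refine (hF.smul_left_of_isCompact isCompact_univ).closure_subset
      (Metric.mem_closure_iff.2 fun ε hε => ?_)
    obtain ⟨_, ⟨f, hf, rfl⟩, hfx⟩ := Metric.mem_closure_iff.1 hy ε hε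
    rw [dist_comm, hp_dist] at hfx
    obtain ⟨g, hg⟩ := exists_lt_of_ciInf_lt hfx
    exact ⟨g • f, smul_mem_smul (mem_univ g) hf, by rwa [dist_comm]⟩
  obtain ⟨g, -, f, hf, rfl⟩ := hx
  exact ⟨f, hf, (map_smul_of_dist_eq_iInf hp_dist g f).symm⟩

end OrbitSpace

section Averaging

variable {G α X Y : Type*} [Group G] [MeasurableSpace G] [MulAction G X] [MeasurableSpace X]
  [MeasurableSMul₂ G X] [MeasurableSpace α] (κ : Measure G) (ν : Measure α) {f : α → X}

theorem map_smul_map_prod_smul [MeasurableMul G] [κ.IsMulLeftInvariant] [SFinite κ] [SFinite ν]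
    (hf : Measurable f) (g : G) :
    ((κ.prod ν).map fun z => z.1 • f z.2).map (g • ·) = (κ.prod ν).map fun z => z.1 • f z.2 := by
  have hact : Measurable fun z : G × α => z.1 • f z.2 := by fun_prop
  have hmul : Measurable (Prod.map (g * ·) id : G × α → G × α) := by fun_prop
  have hcomp : ((g • ·) ∘ fun z : G × α => z.1 • f z.2) =
      (fun z : G × α => z.1 • f z.2) ∘ Prod.map (g * ·) id := by
    funext z
    exact (mul_smul g z.1 (f z.2)).symm
  rw [Measure.map_map (measurable_const_smul g) hact, hcomp, ← Measure.map_map hact hmul,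
    ((measurePreserving_mul_left κ g).prod (MeasurePreserving.id ν)).map_eq]

theorem map_map_prod_smul_of_smul_invariant [IsProbabilityMeasure κ] [SFinite ν]
    [MeasurableSpace Y] {p : X → Y} (hp : Measurable p) (hf : Measurable f)
    (hpG : ∀ (g : G) x, p (g • x) = p x) :
    ((κ.prod ν).map fun z => z.1 • f z.2).map p = ν.map (p ∘ f) := by
  have hcomp : (p ∘ fun z : G × α => z.1 • f z.2) = (p ∘ f) ∘ Prod.snd := by
    funext z
    exact hpG z.1 (f z.2)
  rw [Measure.map_map hp (by fun_prop), hcomp, ← Measure.map_map (hp.comp hf) measurable_snd,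
    Measure.map_snd_prod, measure_univ, one_smul]

end Averaging

theorem pushforward_quotient_onto_general
    {G : Type*} [Group G] [TopologicalSpace G] [IsTopologicalGroup G] [CompactSpace G]
    {X : Type*} [MeasurableSpace X] [MetricSpace X] [BorelSpace X]
    [TopologicalSpace.SeparableSpace X] [CompleteSpace X]
    [MulAction G X] [ContinuousSMul G X]
    (hiso : ∀ g : G, Isometry (fun x : X => g • x))
    {Y : Type*} [MeasurableSpace Y] [MetricSpace Y] [BorelSpace Y]
    (p : X → Y) (hp_surj : Function.Surjective p)
    (hp_dist : ∀ x y : X, dist (p x) (p y) = ⨅ g : G, dist (g • x) y)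
    (q : ℝ) (hq : 1 ≤ q) :
    (∀ μ : Measure X, MemMp q μ → MemMp q (Measure.map p μ)) ∧
    (∀ ν : Measure Y, MemMp q ν →
      ∃ μ : Measure X, MemMp q μ ∧
        (∀ g : G, Measure.map (fun x : X => g • x) μ = μ) ∧
        Measure.map p μ = ν) := by
  have : IsIsometricSMul G X := ⟨hiso⟩
  have hp_lip := lipschitzWith_one_of_dist_eq_iInf hp_dist
  have hp_meas : Measurable p := hp_lip.continuous.measurable
  refine ⟨fun μ hμ => ?_, fun ν hν => ?_⟩
  · refine MemMp.map_of_edist_le hq hp_meas measurable_id (by rwa [Measure.map_id])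
      fun y₀ => ?_
    obtain ⟨x₀, rfl⟩ := hp_surj y₀
    exact ⟨x₀, 0, zero_ne_top, fun x => by simpa using hp_lip.edist_le_mul x x₀⟩
  obtain ⟨s, hs, hps⟩ := exists_measurable_rightInverse_of_isClosedMap hp_lip.continuous hp_surj
    (isClosedMap_of_dist_eq_iInf hp_surj hp_dist)
  borelize G
  let κ := Measure.haarMeasure (⊤ : TopologicalSpace.PositiveCompacts G)
  have : IsProbabilityMeasure κ := ⟨Measure.haarMeasure_self⟩
  have := hν.1
  refine ⟨(κ.prod ν).map fun z => z.1 • s z.2, ?_, map_smul_map_prod_smul κ ν hs, ?_⟩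
  · refine MemMp.map_of_edist_le hq (by fun_prop) measurable_snd
      (by rwa [Measure.map_snd_prod, measure_univ, one_smul]) fun x₀ => ?_
    have horbit : Bornology.IsBounded (MulAction.orbit G x₀) :=
      (isCompact_range (continuous_id.smul continuous_const)).isBounded
    refine ⟨p x₀, ENNReal.ofReal (diam (MulAction.orbit G x₀)), ofReal_ne_top, fun z => ?_⟩
    simpa [hps z.2] using edist_smul_le_of_dist_eq_iInf hp_dist horbit z.1 (s z.2)
  · rw [map_map_prod_smul_of_smul_invariant κ ν hp_meas hs (map_smul_of_dist_eq_iInf hp_dist),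
      hps.comp_eq_id, Measure.map_id]

/-- **Surjectivity of the push-forward onto `M_q(X/G)`** (Theorem 1.4 (1)).
For an isometric continuous action of a compact group `G` on a locally compact Polish
metric space `X`, with `p : X → Y = X/G` the quotient map onto the orbit space equipped
with the metric `d(x*,y*) = inf_g d(g•x, y)`, the map `p_♯ : M_q(X) → M_q(X/G)` is
well defined and onto; moreover every `ν* ∈ M_q(X/G)` is the image of some
`G`-invariant `μ ∈ M_q^G(X)`. -/
theorem pushforward_quotient_onto
    {G : Type*} [Group G] [TopologicalSpace G] [IsTopologicalGroup G] [CompactSpace G]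
    {X : Type*} [MeasurableSpace X] [MetricSpace X] [BorelSpace X]
    [TopologicalSpace.SeparableSpace X] [CompleteSpace X] [LocallyCompactSpace X]
    [MulAction G X] [ContinuousSMul G X]
    (hiso : ∀ g : G, Isometry (fun x : X => g • x))
    {Y : Type*} [MeasurableSpace Y] [MetricSpace Y] [BorelSpace Y]
    (p : X → Y) (hp_cont : Continuous p) (hp_surj : Function.Surjective p)
    (hp_dist : ∀ x y : X, dist (p x) (p y) = ⨅ g : G, dist (g • x) y)
    (hp_fib : ∀ x y : X, p x = p y ↔ ∃ g : G, g • x = y)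
    (q : ℝ) (hq : 1 ≤ q) :
    (∀ μ : Measure X, MemMp q μ → MemMp q (Measure.map p μ)) ∧
    (∀ ν : Measure Y, MemMp q ν →
      ∃ μ : Measure X, MemMp q μ ∧
        (∀ g : G, Measure.map (fun x : X => g • x) μ = μ) ∧
        Measure.map p μ = ν) :=
  pushforward_quotient_onto_general hiso p hp_surj hp_dist q hq
end

section
/- Let a compact group G act continuously on the right of a locally compact Polish metric space (X,d) by isometries, let p : X → X/G be the quotient map onto the orbit space X/G equipped with the metric d_{X/G}(x*,y*) = inf_{g∈G} d(xg,y), and let a,b>0, q ≥ 1. Then W_q^{a,b}(p_♯μ, p_♯ν) ≤ W_q^{a,b}(μ,ν) for all μ,ν ∈ M(X). -/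
open MeasureTheory ENNReal

/-!
The quotient map `p` is 1-Lipschitz, since `d(p x, p y) ≤ d(1 • x, y)`. Push-forward along a
measurable 1-Lipschitz surjection does not increase total variation (`f_♯μ - f_♯ν ≤ f_♯(μ - ν)`),
keeps `q`-moments finite, and carries couplings to couplings of no greater cost. Hence every
competitor `(μ', ν')` for `W_q^{a,b}(μ, ν)` pushes forward to a competitor for
`W_q^{a,b}(p_♯μ, p_♯ν)` of no greater cost.
-/

namespace MeasureTheory.Measure

variable {α β : Type*} [MeasurableSpace α] [MeasurableSpace β] {f : α → β}

lemma map_sub_map_le (hf : Measurable f) (μ ν : Measure α) [IsFiniteMeasure μ]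
    [IsFiniteMeasure ν] : μ.map f - ν.map f ≤ (μ - ν).map f := by
  refine sub_le_of_le_add ?_
  calc μ.map f ≤ (μ - ν + ν).map f := map_mono (sub_le_iff_le_add.mp le_rfl) hf
    _ = (μ - ν).map f + ν.map f := Measure.map_add _ _ hf

end MeasureTheory.Measure

section PushForward

variable {X Y : Type*} [MeasurableSpace X] [MeasurableSpace Y] {f : X → Y}

lemma tvE_map_le (hf : Measurable f) (μ ν : Measure X) [IsFiniteMeasure μ]
    [IsFiniteMeasure ν] : tvE (μ.map f) (ν.map f) ≤ tvE μ ν := by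
  have key : ∀ (μ ν : Measure X) [IsFiniteMeasure μ] [IsFiniteMeasure ν],
      (μ.map f - ν.map f) Set.univ ≤ (μ - ν) Set.univ := fun μ ν _ _ =>
    calc (μ.map f - ν.map f) Set.univ ≤ (μ - ν).map f Set.univ :=
          Measure.map_sub_map_le hf μ ν Set.univ
      _ = (μ - ν) Set.univ := by rw [Measure.map_apply hf .univ, Set.preimage_univ]
  exact add_le_add (key μ ν) (key ν μ)

lemma tvE_zero_right (μ : Measure X) : tvE μ 0 = μ Set.univ := by
  simp [tvE]

lemma IsCoupling.map (hf : Measurable f) {μ ν : Measure X} {π : Measure (X × X)}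
    (hπ : IsCoupling μ ν π) : IsCoupling (μ.map f) (ν.map f) (π.map (Prod.map f f)) := by
  obtain ⟨hprob, hfst, hsnd⟩ := hπ
  have hff : Measurable (Prod.map f f) := hf.prodMap hf
  refine ⟨Measure.isProbabilityMeasure_map hff.aemeasurable, fun A hA => ?_, fun B hB => ?_⟩
  · rw [Measure.map_apply hf .univ, Measure.map_apply hff (hA.prod .univ),
      Set.preimage_prod_map_prod, Set.preimage_univ, Measure.map_apply hf hA]
    exact hfst _ (hf hA)
  · rw [Measure.map_apply hf .univ, Measure.map_apply hff (MeasurableSet.univ.prod hB),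
      Set.preimage_prod_map_prod, Set.preimage_univ, Measure.map_apply hf hB]
    exact hsnd _ (hf hB)

variable [MetricSpace X] [MetricSpace Y]

lemma memMp_map (hf : LipschitzWith 1 f) (hsurj : Function.Surjective f) {q : ℝ} (hq : 0 ≤ q)
    {μ : Measure X} (hμ : MemMp q μ) : MemMp q (μ.map f) := by
  have := hμ.1
  refine ⟨inferInstance, fun y₀ => ?_⟩
  obtain ⟨x₀, rfl⟩ := hsurj y₀
  refine ne_top_of_le_ne_top (hμ.2 x₀) ((lintegral_map_le _ f).trans (lintegral_mono fun x => ?_))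
  exact ENNReal.rpow_le_rpow (by simpa using hf x x₀) hq

lemma wpE_map_le (hf : LipschitzWith 1 f) (hfm : Measurable f) {q : ℝ} (hq : 0 ≤ q)
    (μ ν : Measure X) : WpE q (μ.map f) (ν.map f) ≤ WpE q μ ν := by
  refine ENNReal.rpow_le_rpow ?_ (by positivity)
  rw [Measure.map_apply hfm .univ, Set.preimage_univ]
  refine mul_le_mul_right (le_iInf fun π => iInf_le_of_le ⟨_, π.2.map hfm⟩ ?_) _
  refine (lintegral_map_le _ _).trans (lintegral_mono fun z => ?_)
  exact ENNReal.rpow_le_rpow (by simpa using hf z.1 z.2) hq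

lemma genWE_map_le (hf : LipschitzWith 1 f) (hfm : Measurable f)
    (hsurj : Function.Surjective f) (a b : ℝ) {q : ℝ} (hq : 0 ≤ q) (μ ν : Measure X)
    [IsFiniteMeasure μ] [IsFiniteMeasure ν] :
    genWE a b q (μ.map f) (ν.map f) ≤ genWE a b q μ ν := by
  refine le_iInf fun μ' => le_iInf fun ν' => le_iInf fun hμ' => le_iInf fun hν' =>
    le_iInf fun hmass => ?_
  have := hμ'.1
  have := hν'.1
  have hmass' : μ'.map f Set.univ = ν'.map f Set.univ := by
    rw [Measure.map_apply hfm .univ, Measure.map_apply hfm .univ, Set.preimage_univ, hmass]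
  refine iInf_le_of_le (μ'.map f) <| iInf_le_of_le (ν'.map f) <|
    iInf_le_of_le (memMp_map hf hsurj hq hμ') <| iInf_le_of_le (memMp_map hf hsurj hq hν') <|
    iInf_le_of_le hmass' ?_
  gcongr
  · exact tvE_map_le hfm μ μ'
  · exact tvE_map_le hfm ν ν'
  · exact wpE_map_le hf hfm hq μ' ν'

lemma wpE_zero {q : ℝ} (hq : 0 < q) : WpE q (0 : Measure X) 0 = 0 := by
  simp [WpE, hq]

lemma memMp_zero (q : ℝ) : MemMp q (0 : Measure X) :=
  ⟨inferInstance, fun _ => by simp⟩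

lemma genWE_ne_top (a b : ℝ) {q : ℝ} (hq : 0 < q) (μ ν : Measure X) [IsFiniteMeasure μ]
    [IsFiniteMeasure ν] : genWE a b q μ ν ≠ ∞ := by
  have hle : genWE a b q μ ν ≤ ENNReal.ofReal a * tvE μ 0 + ENNReal.ofReal a * tvE ν 0 +
      ENNReal.ofReal b * WpE q (0 : Measure X) 0 :=
    iInf_le_of_le 0 <| iInf_le_of_le 0 <| iInf_le_of_le (memMp_zero q) <|
      iInf_le_of_le (memMp_zero q) <| iInf_le_of_le rfl le_rfl
  refine ne_top_of_le_ne_top ?_ hle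
  simp [tvE_zero_right, wpE_zero hq, ENNReal.mul_ne_top, measure_ne_top]

lemma genW_map_le (hf : LipschitzWith 1 f) (hfm : Measurable f)
    (hsurj : Function.Surjective f) (a b : ℝ) {q : ℝ} (hq : 0 < q) (μ ν : Measure X)
    [IsFiniteMeasure μ] [IsFiniteMeasure ν] :
    genW a b q (μ.map f) (ν.map f) ≤ genW a b q μ ν :=
  ENNReal.toReal_mono (genWE_ne_top a b hq μ ν) (genWE_map_le hf hfm hsurj a b hq.le μ ν)

end PushForward

lemma lipschitzWith_one_of_dist_eq_iInf_smul {M X Y : Type*} [Monoid M] [MulAction M X]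
    [PseudoMetricSpace X] [PseudoMetricSpace Y] {p : X → Y}
    (hp : ∀ x y : X, dist (p x) (p y) = ⨅ g : M, dist (g • x) y) : LipschitzWith 1 p :=
  .of_dist_le_mul fun x y => by
    rw [hp, NNReal.coe_one, one_mul]
    exact (ciInf_le ⟨0, Set.forall_mem_range.2 fun _ => dist_nonneg⟩ 1).trans_eq
      (by rw [one_smul])

theorem genW_map_quotient_le_general
    {G : Type*} [Group G]
    {X : Type*} [MeasurableSpace X] [MetricSpace X] [BorelSpace X]
    [MulAction G X]
    {Y : Type*} [MeasurableSpace Y] [MetricSpace Y] [BorelSpace Y]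
    (p : X → Y) (hp_cont : Continuous p) (hp_surj : Function.Surjective p)
    (hp_dist : ∀ x y : X, dist (p x) (p y) = ⨅ g : G, dist (g • x) y)
    (a b q : ℝ) (hq : 1 ≤ q)
    (μ ν : Measure X) [IsFiniteMeasure μ] [IsFiniteMeasure ν] :
    genW a b q (Measure.map p μ) (Measure.map p ν) ≤ genW a b q μ ν :=
  genW_map_le (lipschitzWith_one_of_dist_eq_iInf_smul hp_dist) hp_cont.measurable
    hp_surj a b (zero_lt_one.trans_le hq) μ ν

/-- **Push-forward to the quotient does not increase `W_q^{a,b}`** (Theorem 1.4 (2)).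
For an isometric continuous action of a compact group `G` on a locally compact Polish
metric space `X`, with `p : X → Y = X/G` the quotient map onto the orbit space equipped
with the metric `d(x*,y*) = inf_g d(g•x, y)`, one has
`W_q^{a,b}(p_♯μ, p_♯ν) ≤ W_q^{a,b}(μ,ν)` for all finite measures `μ, ν` on `X`. -/
theorem genW_map_quotient_le
    {G : Type*} [Group G] [TopologicalSpace G] [IsTopologicalGroup G] [CompactSpace G]
    {X : Type*} [MeasurableSpace X] [MetricSpace X] [BorelSpace X]
    [TopologicalSpace.SeparableSpace X] [CompleteSpace X] [LocallyCompactSpace X]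
    [MulAction G X] [ContinuousSMul G X]
    (hiso : ∀ g : G, Isometry (fun x : X => g • x))
    {Y : Type*} [MeasurableSpace Y] [MetricSpace Y] [BorelSpace Y]
    (p : X → Y) (hp_cont : Continuous p) (hp_surj : Function.Surjective p)
    (hp_dist : ∀ x y : X, dist (p x) (p y) = ⨅ g : G, dist (g • x) y)
    (hp_fib : ∀ x y : X, p x = p y ↔ ∃ g : G, g • x = y)
    (a b q : ℝ) (ha : 0 < a) (hb : 0 < b) (hq : 1 ≤ q)
    (μ ν : Measure X) [IsFiniteMeasure μ] [IsFiniteMeasure ν] :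
    genW a b q (Measure.map p μ) (Measure.map p ν) ≤ genW a b q μ ν :=
  genW_map_quotient_le_general p hp_cont hp_surj hp_dist a b q hq μ ν
end

section
/- Let (X,d) be a Polish metric space and a,b>0. For all finite nonnegative Borel measures μ₁,μ₂ on X, W₁^{a,b}(μ₁,μ₂) = inf over γ ∈ M of { a|μ₁−γ₁| + a|μ₂−γ₂| + b∫_{X×X} d(x,y) dγ(x,y) }, where γ₁,γ₂ are the two marginals of γ, M = { γ ∈ M(X×X) : ∫_{X×X} d(x,y) dγ(x,y) < ∞ }, and |μᵢ−γᵢ| denotes the total variation norm of the signed measure μᵢ−γᵢ. -/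
/-!
A coupling `π` of `μ'` and `ν'` (equal mass) yields the plan `|μ'| • π`, with marginals `μ'`, `ν'`
and transport cost `|μ'| ∫ d dπ`, so every competitor of `W₁^{a,b}` is matched by a plan of the same
cost. Conversely, the marginals of a plan `γ` are a competitor costing at most as much as `γ`
(through the coupling `γ(X × X)⁻¹ • γ`) as soon as they have finite first moment. Restricting `γ`
to `B_n × B_n` for balls `B_n` exhausting `X` achieves this, does not increase the transport cost,
and changes each total-variation term by at most `γ (B_n × B_n)ᶜ`, which tends to `0`.
-/

open MeasureTheory ENNReal

open Filter Topology Metric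

namespace MeasureTheory.Measure

variable {α β : Type*} [MeasurableSpace α] [MeasurableSpace β]

lemma sub_le_sub_add_sub (μ ν ρ : Measure α) [IsFiniteMeasure μ] [IsFiniteMeasure ν]
    [IsFiniteMeasure ρ] : μ - ρ ≤ (μ - ν) + (ν - ρ) := by
  rw [sub_le_iff_le_add]
  calc μ ≤ (μ - ν) + ν := sub_le_iff_le_add.1 le_rfl
    _ ≤ (μ - ν) + ((ν - ρ) + ρ) := by gcongr; exact sub_le_iff_le_add.1 le_rfl
    _ = (μ - ν) + (ν - ρ) + ρ := (add_assoc _ _ _).symm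

lemma ae_mem_fst_restrict_prod {A : Set α} {B : Set β} (hA : MeasurableSet A)
    (hB : MeasurableSet B) (γ : Measure (α × β)) : ∀ᵐ x ∂(γ.restrict (A ×ˢ B)).fst, x ∈ A :=
  (ae_map_iff measurable_fst.aemeasurable hA).2
    (ae_restrict_of_forall_mem (hA.prod hB) fun _ hz => hz.1)

lemma ae_mem_snd_restrict_prod {A : Set α} {B : Set β} (hA : MeasurableSet A)
    (hB : MeasurableSet B) (γ : Measure (α × β)) : ∀ᵐ y ∂(γ.restrict (A ×ˢ B)).snd, y ∈ B :=
  (ae_map_iff measurable_snd.aemeasurable hB).2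
    (ae_restrict_of_forall_mem (hA.prod hB) fun _ hz => hz.2)

end MeasureTheory.Measure

lemma tendsto_measure_compl_closedBall_prod {α β : Type*} [MeasurableSpace α]
    [MeasurableSpace β] [PseudoMetricSpace α] [PseudoMetricSpace β] [OpensMeasurableSpace α]
    [OpensMeasurableSpace β] (ρ : Measure (α × β)) [IsFiniteMeasure ρ] (x : α) (y : β) :
    Tendsto (fun n : ℕ => ρ (closedBall x n ×ˢ closedBall y n)ᶜ) atTop (𝓝 0) := by
  have hmono : Monotone fun n : ℕ => closedBall x n ×ˢ closedBall y n := fun m n hmn =>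
    Set.prod_mono (closedBall_subset_closedBall (Nat.cast_le.2 hmn))
      (closedBall_subset_closedBall (Nat.cast_le.2 hmn))
  have hunion : ⋃ n : ℕ, closedBall x n ×ˢ closedBall y n = Set.univ := by
    simp_rw [closedBall_prod_same, iUnion_closedBall_nat]
  have hlim := tendsto_measure_iInter_atTop (μ := ρ)
    (fun n => (measurableSet_closedBall.prod measurableSet_closedBall).compl.nullMeasurableSet)
    (fun m n hmn => Set.compl_subset_compl.2 (hmono hmn)) ⟨0, measure_ne_top _ _⟩
  rwa [← Set.compl_iUnion, hunion, Set.compl_univ, measure_empty] at hlim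

section TotalVariation

variable {α : Type*} [MeasurableSpace α]

lemma tvE_ne_top (μ ν : Measure α) [IsFiniteMeasure μ] [IsFiniteMeasure ν] : tvE μ ν ≠ ∞ :=
  add_ne_top.2 ⟨measure_ne_top _ _, measure_ne_top _ _⟩

lemma tvE_of_le {μ ν : Measure α} [IsFiniteMeasure ν] (h : ν ≤ μ) :
    tvE μ ν = μ Set.univ - ν Set.univ := by
  rw [tvE, Measure.sub_apply MeasurableSet.univ h, Measure.sub_eq_zero_of_le h,
    Measure.coe_zero, Pi.zero_apply, add_zero]

lemma tvE_triangle (μ ν ρ : Measure α) [IsFiniteMeasure μ] [IsFiniteMeasure ν]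
    [IsFiniteMeasure ρ] : tvE μ ρ ≤ tvE μ ν + tvE ν ρ := by
  have h₁ := Measure.le_iff'.1 (Measure.sub_le_sub_add_sub μ ν ρ) Set.univ
  have h₂ := Measure.le_iff'.1 (Measure.sub_le_sub_add_sub ρ ν μ) Set.univ
  simp only [Measure.coe_add, Pi.add_apply] at h₁ h₂
  calc tvE μ ρ ≤ ((μ - ν) Set.univ + (ν - ρ) Set.univ) + ((ρ - ν) Set.univ + (ν - μ) Set.univ) :=
        add_le_add h₁ h₂
    _ = tvE μ ν + tvE ν ρ := by simp only [tvE]; ring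

end TotalVariation

section Moments

variable {X : Type*} [MeasurableSpace X] [MetricSpace X]

lemma memMp_of_ae_mem_closedBall {p : ℝ} (hp : 0 ≤ p) {μ : Measure X} [IsFiniteMeasure μ]
    {x₀ : X} {r : ℝ} (h : ∀ᵐ x ∂μ, x ∈ closedBall x₀ r) : MemMp p μ := by
  refine ⟨inferInstance, fun x₁ => ?_⟩
  have hbound : ∀ᵐ x ∂μ, edist x x₁ ^ p ≤ (ENNReal.ofReal r + edist x₀ x₁) ^ p := by
    filter_upwards [h] with x hx
    have hx₀ : edist x x₀ ≤ ENNReal.ofReal r := by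
      rw [edist_dist]; exact ENNReal.ofReal_le_ofReal hx
    gcongr
    exact (edist_triangle _ _ _).trans (add_le_add_left hx₀ _)
  refine ne_top_of_le_ne_top ?_ (lintegral_mono_ae hbound)
  rw [lintegral_const]
  exact mul_ne_top (rpow_ne_top_of_nonneg hp (add_ne_top.2 ⟨ofReal_ne_top, edist_ne_top _ _⟩))
    (measure_ne_top _ _)

end Moments

section Couplings

variable {X : Type*} [MeasurableSpace X]

lemma isCoupling_inv_smul_self (γ : Measure (X × X)) [IsFiniteMeasure γ]
    (h0 : γ Set.univ ≠ 0) : IsCoupling γ.fst γ.snd ((γ Set.univ)⁻¹ • γ) := by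
  have hmt : γ Set.univ ≠ ∞ := measure_ne_top γ _
  refine ⟨⟨by rw [Measure.smul_apply, smul_eq_mul, ENNReal.inv_mul_cancel h0 hmt]⟩, ?_, ?_⟩
  · intro A hA
    rw [Measure.fst_univ, Measure.fst_apply hA, Measure.smul_apply, smul_eq_mul,
      Set.prod_univ, ← mul_assoc, ENNReal.mul_inv_cancel h0 hmt, one_mul]
  · intro B hB
    rw [Measure.snd_univ, Measure.snd_apply hB, Measure.smul_apply, smul_eq_mul,
      Set.univ_prod, ← mul_assoc, ENNReal.mul_inv_cancel h0 hmt, one_mul]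

lemma IsCoupling.fst_smul {μ ν : Measure X} {π : Measure (X × X)} (h : IsCoupling μ ν π) :
    (μ Set.univ • π).fst = μ := by
  ext A hA
  rw [Measure.fst_apply hA, Measure.smul_apply, smul_eq_mul, ← Set.prod_univ]
  exact h.2.1 A hA

lemma IsCoupling.snd_smul {μ ν : Measure X} {π : Measure (X × X)} (h : IsCoupling μ ν π)
    (hmass : μ Set.univ = ν Set.univ) : (μ Set.univ • π).snd = ν := by
  ext B hB
  rw [Measure.snd_apply hB, Measure.smul_apply, smul_eq_mul, ← Set.univ_prod, hmass]
  exact h.2.2 B hB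

end Couplings

section WassersteinOne

variable {X : Type*} [MeasurableSpace X] [MetricSpace X]

lemma WpE_one (μ ν : Measure X) :
    WpE 1 μ ν = μ Set.univ *
      ⨅ π : {π : Measure (X × X) // IsCoupling μ ν π}, ∫⁻ z, edist z.1 z.2 ∂π.1 := by
  simp [WpE]

lemma WpE_one_fst_snd_le (γ : Measure (X × X)) [IsFiniteMeasure γ] :
    WpE 1 γ.fst γ.snd ≤ ∫⁻ z, edist z.1 z.2 ∂γ := by
  rw [WpE_one, Measure.fst_univ]
  by_cases h0 : γ Set.univ = 0
  · simp [h0]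
  calc γ Set.univ * ⨅ π : {π : Measure (X × X) // IsCoupling γ.fst γ.snd π},
        ∫⁻ z, edist z.1 z.2 ∂π.1
      ≤ γ Set.univ * ∫⁻ z, edist z.1 z.2 ∂((γ Set.univ)⁻¹ • γ) :=
        mul_le_mul_right (iInf_le_of_le (ι := {π : Measure (X × X) // IsCoupling γ.fst γ.snd π})
          ⟨_, isCoupling_inv_smul_self γ h0⟩ le_rfl) _
    _ = ∫⁻ z, edist z.1 z.2 ∂γ := by
        rw [lintegral_smul_measure, smul_eq_mul, ← mul_assoc,
          ENNReal.mul_inv_cancel h0 (measure_ne_top γ _), one_mul]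

end WassersteinOne

section Plans

variable {X : Type*} [MeasurableSpace X] [MetricSpace X]

noncomputable def planCost (a b : ℝ) (μ₁ μ₂ : Measure X) (γ : Measure (X × X)) : ℝ≥0∞ :=
  ENNReal.ofReal a * tvE μ₁ γ.fst + ENNReal.ofReal a * tvE μ₂ γ.snd +
    ENNReal.ofReal b * ∫⁻ z, edist z.1 z.2 ∂γ

variable (X) in
def finiteCostPlans : Set (Measure (X × X)) :=
  {γ | IsFiniteMeasure γ ∧ ∫⁻ z, edist z.1 z.2 ∂γ ≠ ∞}

variable {a b : ℝ} {μ₁ μ₂ : Measure X}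

lemma genWE_le_planCost_of_memMp (γ : Measure (X × X)) [IsFiniteMeasure γ]
    (h₁ : MemMp 1 γ.fst) (h₂ : MemMp 1 γ.snd) :
    genWE a b 1 μ₁ μ₂ ≤ planCost a b μ₁ μ₂ γ := by
  have hmass : γ.fst Set.univ = γ.snd Set.univ := by rw [Measure.fst_univ, Measure.snd_univ]
  calc genWE a b 1 μ₁ μ₂
      ≤ ENNReal.ofReal a * tvE μ₁ γ.fst + ENNReal.ofReal a * tvE μ₂ γ.snd +
          ENNReal.ofReal b * WpE 1 γ.fst γ.snd :=
        iInf_le_of_le γ.fst <| iInf_le_of_le γ.snd <| iInf_le_of_le h₁ <| iInf_le_of_le h₂ <|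
          iInf_le _ hmass
    _ ≤ planCost a b μ₁ μ₂ γ := by unfold planCost; gcongr; exact WpE_one_fst_snd_le γ

lemma iInf_planCost_le_of_isCoupling (hb : 0 < b) {μ ν : Measure X} [IsFiniteMeasure μ]
    (hmass : μ Set.univ = ν Set.univ) {π : Measure (X × X)} (hπ : IsCoupling μ ν π) :
    ⨅ γ ∈ finiteCostPlans X, planCost a b μ₁ μ₂ γ ≤
      ENNReal.ofReal a * tvE μ₁ μ + ENNReal.ofReal a * tvE μ₂ ν +
        ENNReal.ofReal b * (μ Set.univ * ∫⁻ z, edist z.1 z.2 ∂π) := by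
  by_cases hcost : μ Set.univ * ∫⁻ z, edist z.1 z.2 ∂π = ∞
  · rw [hcost, mul_top (ofReal_pos.2 hb).ne', add_top]
    exact le_top
  have := hπ.1
  have hγ : μ Set.univ • π ∈ finiteCostPlans X := by
    refine ⟨π.smul_finite (measure_ne_top μ _), ?_⟩
    rwa [lintegral_smul_measure]
  refine (iInf₂_le _ hγ).trans_eq ?_
  rw [planCost, hπ.fst_smul, hπ.snd_smul hmass, lintegral_smul_measure, smul_eq_mul]

variable [IsFiniteMeasure μ₁] [IsFiniteMeasure μ₂]

lemma planCost_ne_top {γ : Measure (X × X)} (hγ : γ ∈ finiteCostPlans X) :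
    planCost a b μ₁ μ₂ γ ≠ ∞ := by
  have := hγ.1
  exact add_ne_top.2 ⟨add_ne_top.2 ⟨mul_ne_top ofReal_ne_top (tvE_ne_top _ _),
    mul_ne_top ofReal_ne_top (tvE_ne_top _ _)⟩, mul_ne_top ofReal_ne_top hγ.2⟩

lemma toReal_planCost (ha : 0 ≤ a) (hb : 0 ≤ b) {γ : Measure (X × X)}
    (hγ : γ ∈ finiteCostPlans X) :
    (planCost a b μ₁ μ₂ γ).toReal =
      a * tv μ₁ γ.fst + a * tv μ₂ γ.snd + b * (∫⁻ z, edist z.1 z.2 ∂γ).toReal := by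
  have := hγ.1
  rw [planCost, toReal_add (add_ne_top.2 ⟨mul_ne_top ofReal_ne_top (tvE_ne_top _ _),
      mul_ne_top ofReal_ne_top (tvE_ne_top _ _)⟩) (mul_ne_top ofReal_ne_top hγ.2),
    toReal_add (mul_ne_top ofReal_ne_top (tvE_ne_top _ _))
      (mul_ne_top ofReal_ne_top (tvE_ne_top _ _)),
    toReal_mul, toReal_mul, toReal_mul, toReal_ofReal ha, toReal_ofReal hb, tv, tv]

lemma planCost_restrict_le (γ : Measure (X × X)) [IsFiniteMeasure γ] {S : Set (X × X)}
    (hS : MeasurableSet S) :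
    planCost a b μ₁ μ₂ (γ.restrict S) ≤ planCost a b μ₁ μ₂ γ + 2 * ENNReal.ofReal a * γ Sᶜ := by
  have hmass : γ Set.univ - (γ.restrict S) Set.univ = γ Sᶜ := by
    rw [Measure.restrict_apply_univ, measure_compl hS (measure_ne_top γ _)]
  have h₁ : tvE μ₁ (γ.restrict S).fst ≤ tvE μ₁ γ.fst + γ Sᶜ := by
    refine (tvE_triangle _ γ.fst _).trans_eq ?_
    rw [tvE_of_le (Measure.fst_mono Measure.restrict_le_self), Measure.fst_univ,
      Measure.fst_univ, hmass]
  have h₂ : tvE μ₂ (γ.restrict S).snd ≤ tvE μ₂ γ.snd + γ Sᶜ := by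
    refine (tvE_triangle _ γ.snd _).trans_eq ?_
    rw [tvE_of_le (Measure.snd_mono Measure.restrict_le_self), Measure.snd_univ,
      Measure.snd_univ, hmass]
  have h₃ : ∫⁻ z, edist z.1 z.2 ∂(γ.restrict S) ≤ ∫⁻ z, edist z.1 z.2 ∂γ :=
    lintegral_mono' Measure.restrict_le_self le_rfl
  calc planCost a b μ₁ μ₂ (γ.restrict S)
      ≤ ENNReal.ofReal a * (tvE μ₁ γ.fst + γ Sᶜ) + ENNReal.ofReal a * (tvE μ₂ γ.snd + γ Sᶜ) +
          ENNReal.ofReal b * ∫⁻ z, edist z.1 z.2 ∂γ := by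
        unfold planCost; gcongr
    _ = planCost a b μ₁ μ₂ γ + 2 * ENNReal.ofReal a * γ Sᶜ := by unfold planCost; ring

lemma genWE_le_planCost [OpensMeasurableSpace X] (γ : Measure (X × X)) [IsFiniteMeasure γ] :
    genWE a b 1 μ₁ μ₂ ≤ planCost a b μ₁ μ₂ γ := by
  rcases isEmpty_or_nonempty X with _ | ⟨⟨x₀⟩⟩
  · exact genWE_le_planCost_of_memMp γ ⟨inferInstance, isEmptyElim⟩ ⟨inferInstance, isEmptyElim⟩
  set S : ℕ → Set (X × X) := fun n => closedBall x₀ n ×ˢ closedBall x₀ n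
  have hS : ∀ n, MeasurableSet (S n) := fun n =>
    measurableSet_closedBall.prod measurableSet_closedBall
  have htrunc : ∀ n,
      genWE a b 1 μ₁ μ₂ ≤ planCost a b μ₁ μ₂ γ + 2 * ENNReal.ofReal a * γ (S n)ᶜ := fun n =>
    calc genWE a b 1 μ₁ μ₂ ≤ planCost a b μ₁ μ₂ (γ.restrict (S n)) :=
          genWE_le_planCost_of_memMp _
            (memMp_of_ae_mem_closedBall zero_le_one (Measure.ae_mem_fst_restrict_prod
              measurableSet_closedBall measurableSet_closedBall γ))
            (memMp_of_ae_mem_closedBall zero_le_one (Measure.ae_mem_snd_restrict_prod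
              measurableSet_closedBall measurableSet_closedBall γ))
      _ ≤ _ := planCost_restrict_le γ (hS n)
  have hlim : Tendsto (fun n => planCost a b μ₁ μ₂ γ + 2 * ENNReal.ofReal a * γ (S n)ᶜ) atTop
      (𝓝 (planCost a b μ₁ μ₂ γ)) := by
    simpa using tendsto_const_nhds.add (ENNReal.Tendsto.const_mul
      (tendsto_measure_compl_closedBall_prod γ x₀ x₀)
      (Or.inr (mul_ne_top ofNat_ne_top ofReal_ne_top)))
  exact ge_of_tendsto' hlim htrunc

theorem genWE_one_eq_iInf_planCost [OpensMeasurableSpace X] (hb : 0 < b) :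
    genWE a b 1 μ₁ μ₂ = ⨅ γ ∈ finiteCostPlans X, planCost a b μ₁ μ₂ γ := by
  refine le_antisymm (le_iInf₂ fun γ hγ => have := hγ.1; genWE_le_planCost γ) ?_
  refine le_iInf fun μ => le_iInf fun ν => le_iInf fun hμ => le_iInf fun _ =>
    le_iInf fun hmass => ?_
  have := hμ.1
  rw [WpE_one]
  by_cases h0 : μ Set.univ = 0
  · have hμ0 : μ = 0 := Measure.measure_univ_eq_zero.1 h0
    have hν0 : ν = 0 := Measure.measure_univ_eq_zero.1 (hmass ▸ h0)
    refine (iInf₂_le 0 ⟨inferInstance, by simp⟩).trans ?_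
    simp [planCost, hμ0, hν0]
  rw [← mul_assoc, mul_iInf_of_ne (mul_ne_zero (ofReal_pos.2 hb).ne' h0)
    (mul_ne_top ofReal_ne_top (measure_ne_top _ _)), add_iInf]
  exact le_iInf fun π =>
    (iInf_planCost_le_of_isCoupling hb hmass π.2).trans_eq (by rw [mul_assoc])

end Plans

theorem genW_eq_sInf_plans_general
    {X : Type*} [MeasurableSpace X] [MetricSpace X] [BorelSpace X]
    (a b : ℝ) (ha : 0 < a) (hb : 0 < b)
    (μ₁ μ₂ : Measure X) [IsFiniteMeasure μ₁] [IsFiniteMeasure μ₂] :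
    genW a b 1 μ₁ μ₂ =
      sInf {r : ℝ | ∃ γ : Measure (X × X), IsFiniteMeasure γ ∧
        (∫⁻ z, edist z.1 z.2 ∂γ) ≠ ∞ ∧
        r = a * tv μ₁ γ.fst + a * tv μ₂ γ.snd +
          b * (∫⁻ z, edist z.1 z.2 ∂γ).toReal} := by
  have hset : {r : ℝ | ∃ γ : Measure (X × X), IsFiniteMeasure γ ∧
      (∫⁻ z, edist z.1 z.2 ∂γ) ≠ ∞ ∧
      r = a * tv μ₁ γ.fst + a * tv μ₂ γ.snd + b * (∫⁻ z, edist z.1 z.2 ∂γ).toReal} =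
      (fun γ => (planCost a b μ₁ μ₂ γ).toReal) '' finiteCostPlans X := by
    ext r
    constructor
    · rintro ⟨γ, hfin, hcost, rfl⟩
      exact ⟨γ, ⟨hfin, hcost⟩, toReal_planCost ha.le hb.le ⟨hfin, hcost⟩⟩
    · rintro ⟨γ, hγ, rfl⟩
      exact ⟨γ, hγ.1, hγ.2, toReal_planCost ha.le hb.le hγ⟩
  rw [genW, genWE_one_eq_iInf_planCost hb, ← sInf_image, hset,
    toReal_sInf _ (Set.forall_mem_image.2 fun γ hγ => planCost_ne_top hγ)]
  exact congrArg sInf (Set.image_image _ _ _)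

/-- **Formulation of `W₁^{a,b}` via (not necessarily probability) plans** (Lemma 5.3).
`W₁^{a,b}(μ₁,μ₂) = inf_{γ ∈ M} { a|μ₁-γ₁| + a|μ₂-γ₂| + b ∫ d dγ }`, where `γ₁, γ₂` are
the marginals of `γ` and `M` is the set of finite nonnegative Borel measures on `X × X`
with `∫ d dγ < ∞`. -/
theorem genW_eq_sInf_plans
    {X : Type*} [MeasurableSpace X] [MetricSpace X] [BorelSpace X]
    [TopologicalSpace.SeparableSpace X] [CompleteSpace X]
    (a b : ℝ) (ha : 0 < a) (hb : 0 < b)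
    (μ₁ μ₂ : Measure X) [IsFiniteMeasure μ₁] [IsFiniteMeasure μ₂] :
    genW a b 1 μ₁ μ₂ =
      sInf {r : ℝ | ∃ γ : Measure (X × X), IsFiniteMeasure γ ∧
        (∫⁻ z, edist z.1 z.2 ∂γ) ≠ ∞ ∧
        r = a * tv μ₁ γ.fst + a * tv μ₂ γ.snd +
          b * (∫⁻ z, edist z.1 z.2 ∂γ).toReal} :=
  genW_eq_sInf_plans_general a b ha hb μ₁ μ₂
end
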